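/- Let S = (N, M₀) be a strongly connected H1S-WMG≤ system such that the net obtained by removing the shared place (if any) is also strongly connected, with incidence matrix I. Then S is live if and only if there is no solution (M, Y) with M ∈ ℕ^P, Y ∈ ℕ^T, of the state equation M = M₀ + I·Y such that M is a dead marking (no transition is enabled at M). -/

import Mathlib

open Classical

structure PetriNet (P T : Type) where
  pre  : P → T → ℕ
  post : T → P → ℕ

namespace PetriNet

variable {P T : Type}

def enabled (N : PetriNet P T) (M : P → ℕ) (t : T) : Prop :=
  ∀ p, N.pre p t ≤ M p

def fire (N : PetriNet P T) (M : P → ℕ) (t : T) : P → ℕ :=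
  fun p => M p - N.pre p t + N.post t p

def feasible (N : PetriNet P T) : (P → ℕ) → List T → Prop
  | _, [] => True
  | M, t :: σ => N.enabled M t ∧ N.feasible (N.fire M t) σ

def fireSeq (N : PetriNet P T) : (P → ℕ) → List T → (P → ℕ)
  | M, [] => M
  | M, t :: σ => N.fireSeq (N.fire M t) σ

/-- `M'` is reachable from `M` by some feasible firing sequence. -/
def reach (N : PetriNet P T) (M M' : P → ℕ) : Prop :=
  ∃ σ : List T, N.feasible M σ ∧ N.fireSeq M σ = M'

/-- Liveness: from every reachable marking, every transition can eventually be enabled. -/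
def live (N : PetriNet P T) (M0 : P → ℕ) : Prop :=
  ∀ M, N.reach M0 M → ∀ t, ∃ M', N.reach M M' ∧ N.enabled M' t

def incidence (N : PetriNet P T) (p : P) (t : T) : ℤ :=
  (N.post t p : ℤ) - (N.pre p t : ℤ)

/-- Potential reachability: the state equation `M = M0 + I·Y` has a solution `Y ∈ ℕ^T`. -/
def potReach [Fintype T] (N : PetriNet P T) (M0 M : P → ℕ) : Prop :=
  ∃ Y : T → ℕ, ∀ p, (M p : ℤ) = (M0 p : ℤ) + ∑ t, N.incidence p t * (Y t : ℤ)

/-- A siphon: a nonempty set of places whose set of input transitions is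
included in its set of output transitions. -/
def siphon (N : PetriNet P T) (D : Set P) : Prop :=
  D.Nonempty ∧ ∀ t, (∃ p ∈ D, 0 < N.post t p) → ∃ p ∈ D, 0 < N.pre p t

/-- `D` is deadlocked at `M`: every place of `D` marks below each of its output weights. -/
def deadlockedAt (N : PetriNet P T) (D : Set P) (M : P → ℕ) : Prop :=
  ∀ p ∈ D, ∀ t, 0 < N.pre p t → M p < N.pre p t

def reversible (N : PetriNet P T) (M0 : P → ℕ) : Prop :=
  ∀ M, N.reach M0 M → N.reach M M0

def deadlockable (N : PetriNet P T) (M0 : P → ℕ) : Prop :=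
  ∃ M, N.reach M0 M ∧ ∀ t, ¬ N.enabled M t

def bounded (N : PetriNet P T) (M0 : P → ℕ) : Prop :=
  ∃ k, ∀ M, N.reach M0 M → ∀ p, M p ≤ k

def structBounded (N : PetriNet P T) : Prop :=
  ∀ M0 : P → ℕ, N.bounded M0

/-- All output weights of each place are equal. -/
def homogeneous (N : PetriNet P T) : Prop :=
  ∀ p t t', 0 < N.pre p t → 0 < N.pre p t' → N.pre p t = N.pre p t'

/-- A place with at least two output transitions. -/
def sharedPlace (N : PetriNet P T) (p : P) : Prop :=
  ∃ t t', t ≠ t' ∧ 0 < N.pre p t ∧ 0 < N.pre p t'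

/-- Homogeneous net with at most one shared place. -/
def H1S (N : PetriNet P T) : Prop :=
  N.homogeneous ∧ ∀ p q, N.sharedPlace p → N.sharedPlace q → p = q

/-- H1S net such that deleting the shared place (if any) yields a WMG≤ :
every non-shared place has at most one input and at most one output transition. -/
def H1S_WMGle (N : PetriNet P T) : Prop :=
  N.H1S ∧ ∀ p, ¬ N.sharedPlace p →
    (∀ t t', 0 < N.post t p → 0 < N.post t' p → t = t') ∧
    (∀ t t', 0 < N.pre p t → 0 < N.pre p t' → t = t')

end PetriNet

namespace PetriNet

/-- The underlying bipartite directed graph of a net. -/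
def netEdge {P T : Type} (N : PetriNet P T) : (P ⊕ T) → (P ⊕ T) → Prop
  | Sum.inl p, Sum.inr t => 0 < N.pre p t
  | Sum.inr t, Sum.inl p => 0 < N.post t p
  | _, _ => False

def stronglyConnected {P T : Type} (N : PetriNet P T) : Prop :=
  ∀ a b : P ⊕ T, Relation.ReflTransGen N.netEdge a b

/-- Nodes remaining after deleting the shared place(s). -/
def notShared {P T : Type} (N : PetriNet P T) : (P ⊕ T) → Prop
  | Sum.inl p => ¬ N.sharedPlace p
  | Sum.inr _ => True

/-- Strong connectedness of the net obtained by removing the shared place(s). -/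
def sconnWithoutShared {P T : Type} (N : PetriNet P T) : Prop :=
  ∀ a b : P ⊕ T, N.notShared a → N.notShared b →
    Relation.ReflTransGen
      (fun x y => N.netEdge x y ∧ N.notShared x ∧ N.notShared y) a b

end PetriNet

/-!
Live ⇒ no dead solution: given `M = M1 + I·Y` with `M1` reachable, fire enabled transitions of
the support of `Y` while possible (induction on `∑ Y`). When none is enabled, some transition `e`
is enabled at `M1` but not at `M`; the place disabling it must be the shared one, which therefore
holds enough tokens at `M1` for all its consumers. Hence every transition of the support of `Y` is
disabled at `M1` by a non-shared place, and these places form a siphon deadlocked at `M1`: the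
transitions of the support can never fire again, contradicting liveness.

Not live ⇒ dead solution: if `t₀` is never enabled again after `M1`, it fires boundedly often.
Bounded firing propagates along the net without its shared place: from a transition to the
non-shared places it feeds (of which it is the only producer), and from a place to its consumers
(the marking stays nonnegative). So every transition fires boundedly often, every run from `M1`
is finite, and it ends in a reachable, hence potentially reachable, dead marking.
-/

namespace PetriNet

variable {P T : Type} {N : PetriNet P T}

def IsDead (N : PetriNet P T) (M : P → ℕ) : Prop :=
  ∀ t, ¬ N.enabled M t

/-- `N.potReach M M'` unfolds to `∃ Y, N.StateEq M Y M'`. -/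
def StateEq [Fintype T] (N : PetriNet P T) (M : P → ℕ) (Y : T → ℕ) (M' : P → ℕ) : Prop :=
  ∀ p, (M' p : ℤ) = M p + ∑ t, N.incidence p t * Y t

def FiringBounded (N : PetriNet P T) (M : P → ℕ) (t : T) : Prop :=
  ∃ B, ∀ σ, N.feasible M σ → σ.count t ≤ B

lemma feasible_append {M : P → ℕ} {σ σ' : List T} :
    N.feasible M (σ ++ σ') ↔ N.feasible M σ ∧ N.feasible (N.fireSeq M σ) σ' := by
  induction σ generalizing M with
  | nil => simp [feasible, fireSeq]
  | cons t σ ih => simp only [List.cons_append, feasible, fireSeq, ih, and_assoc]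

lemma fireSeq_append (M : P → ℕ) (σ σ' : List T) :
    N.fireSeq M (σ ++ σ') = N.fireSeq (N.fireSeq M σ) σ' := by
  induction σ generalizing M with
  | nil => rfl
  | cons t σ ih => exact ih _

lemma reach.refl (M : P → ℕ) : N.reach M M := ⟨[], trivial, rfl⟩

lemma reach.trans {M M' M'' : P → ℕ} (h : N.reach M M') (h' : N.reach M' M'') :
    N.reach M M'' := by
  obtain ⟨σ, hσ, rfl⟩ := h
  obtain ⟨σ', hσ', rfl⟩ := h'
  exact ⟨σ ++ σ', feasible_append.2 ⟨hσ, hσ'⟩, fireSeq_append M σ σ'⟩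

lemma reach.fire {M M' : P → ℕ} {t : T} (h : N.reach M M') (ht : N.enabled M' t) :
    N.reach M (N.fire M' t) :=
  h.trans ⟨[t], ⟨ht, trivial⟩, rfl⟩

lemma live.exists_enabled [Nonempty T] {M0 M : P → ℕ} (hlive : N.live M0)
    (hM : N.reach M0 M) : ∃ t, N.enabled M t := by
  obtain ⟨M', ⟨σ, hσ, rfl⟩, hen⟩ := hlive M hM (Classical.arbitrary T)
  cases σ with
  | nil => exact ⟨_, hen⟩
  | cons t σ => exact ⟨t, hσ.1⟩

lemma exists_reach_enabled_of_mem {M : P → ℕ} {σ : List T} {t : T} (hσ : N.feasible M σ)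
    (ht : t ∈ σ) : ∃ M', N.reach M M' ∧ N.enabled M' t := by
  induction σ generalizing M with
  | nil => cases ht
  | cons τ σ ih =>
    rcases List.mem_cons.1 ht with rfl | ht
    · exact ⟨M, reach.refl M, hσ.1⟩
    · obtain ⟨M', hM', hen⟩ := ih hσ.2 ht
      exact ⟨M', (reach.refl M |>.fire hσ.1).trans hM', hen⟩

lemma firingBounded_of_forall_not_enabled {M : P → ℕ} {t : T}
    (h : ∀ M', N.reach M M' → ¬ N.enabled M' t) : N.FiringBounded M t :=
  ⟨0, fun _ hσ => (List.count_eq_zero.2 fun ht =>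
    let ⟨M', hM', hen⟩ := exists_reach_enabled_of_mem hσ ht; h M' hM' hen).le⟩

lemma exists_feasible_length_eq {M : P → ℕ}
    (hfree : ∀ M', N.reach M M' → ∃ t, N.enabled M' t) (n : ℕ) :
    ∃ σ, N.feasible M σ ∧ σ.length = n := by
  induction n with
  | zero => exact ⟨[], trivial, rfl⟩
  | succ n ih =>
    obtain ⟨σ, hσ, rfl⟩ := ih
    obtain ⟨t, ht⟩ := hfree _ ⟨σ, hσ, rfl⟩
    exact ⟨σ ++ [t], feasible_append.2 ⟨hσ, ht, trivial⟩, by simp⟩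

lemma cast_fire {M : P → ℕ} {t : T} (ht : N.enabled M t) (p : P) :
    (N.fire M t p : ℤ) = M p + N.incidence p t := by
  simp only [fire, incidence]
  push_cast [ht p]
  ring

section StateEquation

variable [Fintype T]

lemma sum_incidence_add_single (p : P) (Y : T → ℕ) (t : T) :
    ∑ τ, N.incidence p τ * ((Y + Pi.single t 1 : T → ℕ) τ : ℤ) =
      ∑ τ, N.incidence p τ * Y τ + N.incidence p t := by
  simp [Pi.single_apply, mul_add, Finset.sum_add_distrib]

lemma StateEq.eq_of_zero {M M' : P → ℕ} (h : N.StateEq M 0 M') : M' = M := by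
  funext p
  simpa using h p

lemma stateEq_fire_iff {M M' : P → ℕ} {t : T} {Y : T → ℕ} (ht : N.enabled M t) :
    N.StateEq (N.fire M t) Y M' ↔ N.StateEq M (Y + Pi.single t 1) M' := by
  refine forall_congr' fun p => ?_
  rw [cast_fire ht, sum_incidence_add_single]
  constructor <;> intro h <;> linarith

lemma stateEq_count {M : P → ℕ} {σ : List T} (hσ : N.feasible M σ) :
    N.StateEq M (fun t => σ.count t) (N.fireSeq M σ) := by
  induction σ generalizing M with
  | nil => intro p; simp [fireSeq]
  | cons t σ ih =>
    have hcount : (fun τ => (t :: σ).count τ) = (fun τ => σ.count τ) + Pi.single t 1 := by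
      funext τ
      by_cases h : τ = t
      · subst h; simp
      · simp [h, Ne.symm h]
    rw [hcount, ← stateEq_fire_iff hσ.1]
    exact ih hσ.2

lemma reach.potReach {M M' : P → ℕ} (h : N.reach M M') : N.potReach M M' := by
  obtain ⟨σ, hσ, rfl⟩ := h
  exact ⟨_, stateEq_count hσ⟩

lemma StateEq.pre_mul_le {M M' : P → ℕ} {Y : T → ℕ} (h : N.StateEq M Y M') (p : P) (t : T) :
    N.pre p t * Y t ≤ M p + ∑ τ, N.post τ p * Y τ := by
  have hp := h p
  have hpre : N.pre p t * Y t ≤ ∑ τ, N.pre p τ * Y τ :=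
    Finset.single_le_sum (f := fun τ => N.pre p τ * Y τ) (fun _ _ => Nat.zero_le _)
      (Finset.mem_univ t)
  simp only [incidence, sub_mul, Finset.sum_sub_distrib] at hp
  zify at hpre ⊢
  linarith [(M' p).cast_nonneg (α := ℤ)]

lemma StateEq.le_of_consumers_idle {M M' : P → ℕ} {Y : T → ℕ} (h : N.StateEq M Y M') {p : P}
    (hidle : ∀ t, 0 < N.pre p t → Y t = 0) : M p ≤ M' p := by
  have hpre : ∑ τ, (N.pre p τ : ℤ) * Y τ = 0 := Finset.sum_eq_zero fun τ _ => by
    rcases (N.pre p τ).eq_zero_or_pos with h0 | hpos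
    · simp [h0]
    · simp [hidle τ hpos]
  have hpost : 0 ≤ ∑ τ, (N.post τ p : ℤ) * Y τ := by positivity
  have hp := h p
  simp only [incidence, sub_mul, Finset.sum_sub_distrib, hpre] at hp
  zify
  linarith

lemma StateEq.exists_producer {M M' : P → ℕ} {Y : T → ℕ} (h : N.StateEq M Y M') {p : P} {t : T}
    (hYt : 0 < Y t) (hlt : M p < N.pre p t) : ∃ u, 0 < N.post u p ∧ 0 < Y u := by
  have hprod : 0 < ∑ τ, N.post τ p * Y τ := by
    have hbal := h.pre_mul_le p t
    have hpre : N.pre p t ≤ N.pre p t * Y t := Nat.le_mul_of_pos_right _ hYt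
    omega
  obtain ⟨u, -, hu⟩ := Finset.sum_pos_iff.1 hprod
  exact ⟨u, CanonicallyOrderedAdd.mul_pos.1 hu⟩

end StateEquation

section Siphon

lemma fire_eq_of_siphon {D : Set P} {M : P → ℕ} {t : T} (hD : N.siphon D)
    (hdl : N.deadlockedAt D M) (ht : N.enabled M t) {p : P} (hp : p ∈ D) :
    N.fire M t p = M p := by
  have hidle : ∀ q ∈ D, N.pre q t = 0 := fun q hq => by
    by_contra h0
    exact (hdl q hq t (Nat.pos_of_ne_zero h0)).not_ge (ht q)
  have hpost : N.post t p = 0 := by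
    by_contra h0
    obtain ⟨q, hq, hpre⟩ := hD.2 t ⟨p, hp, Nat.pos_of_ne_zero h0⟩
    exact hpre.ne' (hidle q hq)
  simp [fire, hidle p hp, hpost]

lemma reach_eq_of_siphon {D : Set P} {M M' : P → ℕ} (hD : N.siphon D)
    (hdl : N.deadlockedAt D M) (h : N.reach M M') : ∀ p ∈ D, M' p = M p := by
  obtain ⟨σ, hσ, rfl⟩ := h
  induction σ generalizing M with
  | nil => exact fun _ _ => rfl
  | cons t σ ih =>
    have hfire := fun p (hp : p ∈ D) => fire_eq_of_siphon hD hdl hσ.1 hp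
    have hdl' : N.deadlockedAt D (N.fire M t) := fun p hp => hfire p hp ▸ hdl p hp
    exact fun p hp => (ih hdl' hσ.2 p hp).trans (hfire p hp)

lemma not_live_of_deadlockedAt_siphon {D : Set P} {M0 M : P → ℕ} (hD : N.siphon D)
    (hdl : N.deadlockedAt D M) (hM : N.reach M0 M) {p : P} (hp : p ∈ D) {t : T}
    (hpt : 0 < N.pre p t) : ¬ N.live M0 := fun hlive => by
  obtain ⟨M', hM', hen⟩ := hlive M hM t
  exact (hdl p hp t hpt).not_ge (reach_eq_of_siphon hD hdl hM' p hp ▸ hen p)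

end Siphon

section Forward

variable [Fintype T]

/-- The place disabling `e` at the dead marking `M` cannot be a non-shared place, since its only
consumer `e` does not occur in `Y`; so it is the shared place, which therefore holds enough tokens
at `M1` for each of its (equally weighted) output transitions. -/
lemma pre_le_of_sharedPlace (hclass : N.H1S_WMGle) {M1 M : P → ℕ} {Y : T → ℕ}
    (hY : N.StateEq M1 Y M) (hM : N.IsDead M) {e : T} (he : N.enabled M1 e) (hYe : Y e = 0)
    {s : P} (hs : N.sharedPlace s) {t : T} (ht : 0 < N.pre s t) : N.pre s t ≤ M1 s := by
  obtain ⟨s₀, hs₀⟩ := not_forall.1 (hM e)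
  have hlt : M s₀ < N.pre s₀ e := not_le.1 hs₀
  have hpos : 0 < N.pre s₀ e := (Nat.zero_le _).trans_lt hlt
  have hshared : N.sharedPlace s₀ := by
    by_contra hns
    have hidle : ∀ τ, 0 < N.pre s₀ τ → Y τ = 0 := fun τ hτ =>
      (hclass.2 s₀ hns).2 τ e hτ hpos ▸ hYe
    exact (hY.le_of_consumers_idle hidle).not_gt (hlt.trans_le (he s₀))
  obtain rfl := hclass.1.2 s s₀ hs hshared
  rw [hclass.1.1 s t e ht hpos]
  exact he s

/-- The siphon consists of the non-shared places disabling some transition of the support of `Y`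
at `M1`: by the state equation each has a producer in that support, in turn disabled by one of
them. -/
lemma exists_deadlocked_siphon (hclass : N.H1S_WMGle) {M1 M : P → ℕ} {Y : T → ℕ}
    (hY : N.StateEq M1 Y M) (hM : N.IsDead M) {e : T} (he : N.enabled M1 e)
    (hstuck : ∀ t, 0 < Y t → ¬ N.enabled M1 t) {t₁ : T} (ht₁ : 0 < Y t₁) :
    ∃ D, N.siphon D ∧ N.deadlockedAt D M1 ∧ ∃ p ∈ D, 0 < N.pre p t₁ := by
  have hYe : Y e = 0 := by
    by_contra h
    exact hstuck e (Nat.pos_of_ne_zero h) he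
  let D : Set P := {q | ¬ N.sharedPlace q ∧ ∃ t, 0 < Y t ∧ M1 q < N.pre q t}
  have hin : ∀ t, 0 < Y t → ∃ q ∈ D, 0 < N.pre q t := fun t ht => by
    obtain ⟨q, hq⟩ := not_forall.1 (hstuck t ht)
    have hlt : M1 q < N.pre q t := not_le.1 hq
    have hns : ¬ N.sharedPlace q := fun hs =>
      hlt.not_ge (pre_le_of_sharedPlace hclass hY hM he hYe hs ((Nat.zero_le _).trans_lt hlt))
    exact ⟨q, ⟨hns, t, ht, hlt⟩, (Nat.zero_le _).trans_lt hlt⟩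
  refine ⟨D, ⟨?_, ?_⟩, ?_, hin t₁ ht₁⟩
  · obtain ⟨q, hq, -⟩ := hin t₁ ht₁
    exact ⟨q, hq⟩
  · rintro t ⟨q, ⟨hns, t', hYt', hlt⟩, hpost⟩
    obtain ⟨u, hu, hYu⟩ := hY.exists_producer hYt' hlt
    exact hin t ((hclass.2 q hns).1 t u hpost hu ▸ hYu)
  · rintro q ⟨hns, t', -, hlt⟩ τ hτ
    rwa [(hclass.2 q hns).2 τ t' hτ ((Nat.zero_le _).trans_lt hlt)]

theorem not_isDead_of_stateEq [Nonempty T] (hclass : N.H1S_WMGle) {M0 M1 M : P → ℕ}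
    {Y : T → ℕ} (hlive : N.live M0) (hM1 : N.reach M0 M1) (hY : N.StateEq M1 Y M) :
    ¬ N.IsDead M := by
  by_cases hfire : ∃ t, N.enabled M1 t ∧ 0 < Y t
  · obtain ⟨t, ht, hYt⟩ := hfire
    have hsplit : Y = (Y - Pi.single t 1) + Pi.single t 1 := by
      funext τ
      by_cases hτ : τ = t
      · subst hτ
        simp only [Pi.add_apply, Pi.sub_apply, Pi.single_eq_same]
        omega
      · simp [hτ]
    rw [hsplit, ← stateEq_fire_iff ht] at hY
    exact not_isDead_of_stateEq hclass hlive (hM1.fire ht) hY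
  · intro hM
    have hstuck : ∀ t, 0 < Y t → ¬ N.enabled M1 t := fun t hYt ht => hfire ⟨t, ht, hYt⟩
    obtain ⟨e, he⟩ := hlive.exists_enabled hM1
    by_cases hY0 : Y = 0
    · subst hY0
      exact hM e (hY.eq_of_zero ▸ he)
    obtain ⟨t₁, ht₁⟩ := Function.ne_iff.1 hY0
    obtain ⟨D, hD, hdl, p, hp, hpt⟩ :=
      exists_deadlocked_siphon hclass hY hM he hstuck (Nat.pos_of_ne_zero ht₁)
    exact not_live_of_deadlockedAt_siphon hD hdl hM1 hp hpt hlive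
termination_by ∑ t, Y t
decreasing_by
  exact Finset.sum_lt_sum (fun τ _ => tsub_le_self) ⟨t, Finset.mem_univ t, by simpa using hYt⟩

end Forward

section Backward

variable [Fintype T]

lemma FiringBounded.of_producers {M : P → ℕ} {p : P}
    (hprod : ∀ τ, 0 < N.post τ p → N.FiringBounded M τ) {t : T} (ht : 0 < N.pre p t) :
    N.FiringBounded M t := by
  have : ∀ τ, ∃ B, 0 < N.post τ p → ∀ σ, N.feasible M σ → σ.count τ ≤ B := fun τ => by
    by_cases hτ : 0 < N.post τ p
    · obtain ⟨B, hB⟩ := hprod τ hτ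
      exact ⟨B, fun _ => hB⟩
    · exact ⟨0, fun h => absurd h hτ⟩
  choose B hB using this
  refine ⟨M p + ∑ τ, N.post τ p * B τ, fun σ hσ => ?_⟩
  calc σ.count t ≤ N.pre p t * σ.count t := Nat.le_mul_of_pos_left _ ht
    _ ≤ M p + ∑ τ, N.post τ p * σ.count τ := (stateEq_count hσ).pre_mul_le p t
    _ ≤ M p + ∑ τ, N.post τ p * B τ := by
      refine Nat.add_le_add_left (Finset.sum_le_sum fun τ _ => ?_) _
      rcases (N.post τ p).eq_zero_or_pos with h0 | hτ
      · simp [h0]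
      · exact Nat.mul_le_mul_left _ (hB τ hτ σ hσ)

lemma firingBounded_of_sconnWithoutShared (hclass : N.H1S_WMGle) (hsc' : N.sconnWithoutShared)
    {M : P → ℕ} {t₀ : T} (ht₀ : N.FiringBounded M t₀) (t : T) : N.FiringBounded M t := by
  let H : P ⊕ T → Prop :=
    Sum.elim (fun p => ∀ τ, 0 < N.post τ p → N.FiringBounded M τ) (N.FiringBounded M)
  have hstep : ∀ a b, N.netEdge a b → N.notShared b → H a → H b := by
    rintro (p | τ) (p' | τ') hedge hns hH
    · exact hedge.elim
    · exact FiringBounded.of_producers hH hedge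
    · exact fun τ'' hτ'' => (hclass.2 p' hns).1 τ'' τ hτ'' hedge ▸ hH
    · exact hedge.elim
  suffices ∀ a, Relation.ReflTransGen _ (Sum.inr t₀) a → H a from
    this (Sum.inr t) (hsc' _ _ trivial trivial)
  intro a hpath
  induction hpath with
  | refl => exact ht₀
  | tail _ hedge ih => exact hstep _ _ hedge.1 hedge.2.2 ih

lemma length_le_of_forall_firingBounded {M : P → ℕ} (h : ∀ t, N.FiringBounded M t) :
    ∃ B, ∀ σ, N.feasible M σ → σ.length ≤ B := by
  choose B hB using h
  refine ⟨∑ t, B t, fun σ hσ => ?_⟩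
  calc σ.length = ∑ t, σ.count t := by
        simpa using (Multiset.sum_count_eq_card (s := Finset.univ) (m := (σ : Multiset T))
          (by simp)).symm
    _ ≤ ∑ t, B t := Finset.sum_le_sum fun t _ => hB t σ hσ

lemma exists_reach_isDead_of_starved (hclass : N.H1S_WMGle) (hsc' : N.sconnWithoutShared)
    {M : P → ℕ} {t₀ : T} (hstarve : ∀ M', N.reach M M' → ¬ N.enabled M' t₀) :
    ∃ M', N.reach M M' ∧ N.IsDead M' := by
  by_contra hnone
  have hfree : ∀ M', N.reach M M' → ∃ t, N.enabled M' t := fun M' hM' => by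
    by_contra h
    exact hnone ⟨M', hM', not_exists.1 h⟩
  obtain ⟨B, hB⟩ := length_le_of_forall_firingBounded
    (firingBounded_of_sconnWithoutShared hclass hsc' (firingBounded_of_forall_not_enabled hstarve))
  obtain ⟨σ, hσ, hlen⟩ := exists_feasible_length_eq hfree (B + 1)
  exact absurd (hB σ hσ) (by omega)

theorem exists_potReach_isDead_of_not_live (hclass : N.H1S_WMGle) (hsc' : N.sconnWithoutShared)
    {M0 : P → ℕ} (hlive : ¬ N.live M0) : ∃ M, N.potReach M0 M ∧ N.IsDead M := by
  simp only [live, not_forall, not_exists, not_and] at hlive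
  obtain ⟨M1, hM1, t₀, hstarve⟩ := hlive
  obtain ⟨M, hM, hdead⟩ := exists_reach_isDead_of_starved hclass hsc' hstarve
  exact ⟨M, (hM1.trans hM).potReach, hdead⟩

end Backward

end PetriNet

theorem stmt8_general {P T : Type} [Fintype T] [Nonempty T]
    (N : PetriNet P T) (M0 : P → ℕ)
    (hclass : N.H1S_WMGle)
    (hsc' : N.sconnWithoutShared) :
    N.live M0 ↔
      ¬ ∃ M : P → ℕ, N.potReach M0 M ∧ ∀ t, ¬ N.enabled M t := by
  constructor
  · rintro hlive ⟨M, ⟨Y, hY⟩, hdead⟩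
    exact N.not_isDead_of_stateEq hclass hlive (.refl M0) hY hdead
  · intro hno
    by_contra hlive
    exact hno (N.exists_potReach_isDead_of_not_live hclass hsc' hlive)

/-- a strongly connected H1S-WMG≤ system whose shared-place removal
yields a strongly connected net is live iff no solution of the state equation is a
dead marking. -/
theorem stmt8 {P T : Type} [Fintype T] [Nonempty P] [Nonempty T]
    (N : PetriNet P T) (M0 : P → ℕ)
    (hclass : N.H1S_WMGle)
    (hsc : N.stronglyConnected)
    (hsc' : N.sconnWithoutShared) :
    N.live M0 ↔
      ¬ ∃ M : P → ℕ, N.potReach M0 M ∧ ∀ t, ¬ N.enabled M t :=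
  stmt8_general N M0 hclass hsc'
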